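/- Let s ≥ 4 be an integer and let λ be an s-minimal biliaison type. If q_s(λ) ≤ (s−1)², then λ = ∅, λ = (1), or λ = (s−1). If (s−1)² < q_s(λ) ≤ s², then either s = 4 and λ = (2) or λ = (1, 3), or s = 5 and λ = (2) or λ = (3). -/

import Mathlib

/-- An `s`-minimal biliaison type: a strictly increasing finite sequence of
positive integers, all strictly less than `s` (the empty sequence is allowed). -/
def SMinimal (s : ℕ) (l : List ℕ) : Prop :=
  l.Chain' (· < ·) ∧ ∀ k ∈ l, 0 < k ∧ k < s

/-- The quadratic form `q_s(λ) = Σ_i k_i(s−1)(s−k_i) − 2 Σ_{i<j} k_i(s−k_j)`. -/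
def qform (s : ℕ) (l : List ℕ) : ℤ :=
  (∑ i : Fin l.length, (l.get i : ℤ) * ((s : ℤ) - 1) * ((s : ℤ) - l.get i))
  - 2 * ∑ i : Fin l.length, ∑ j : Fin l.length,
      if (i : ℕ) < (j : ℕ) then (l.get i : ℤ) * ((s : ℤ) - l.get j) else 0

/-- The `s`-dual `λ′ = (s−k_u, …, s−k_1)` of a biliaison type. -/
def sdual (s : ℕ) (l : List ℕ) : List ℕ := (l.map (fun k => s - k)).reverse

/-!
Peeling off the first entry `k` of `λ = (k, t)` changes `q_s` by
`k (s - 1)(s - k) - 2k Σ_{j ∈ t} (s - j)`. Since the entries of `t` are distinct and lie strictly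
between `k` and `s`, this increment is at least `(s - 1 - u)² + u` with `u = u_t`, so
`q_s(λ) ≥ Σ_{i < u_λ} ((s - 1 - i)² + i)`. Already for `u_λ = 2` this exceeds `(s - 1)²`, and it
exceeds `s²` unless `s = 4`, where `u_λ = 3` is excluded as well. For `λ = (k)` one has
`q_s(λ) = k (s - 1)(s - k)`, which equals `(s - 1)²` for `k ∈ {1, s - 1}` and is at least
`2 (s - 1)(s - 2)` otherwise.
-/

open Finset

lemma SMinimal.pairwise {s : ℕ} {l : List ℕ} (hl : SMinimal s l) : l.Pairwise (· < ·) :=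
  List.isChain_iff_pairwise.mp hl.1

section qform

variable (s : ℕ)

@[simp]
lemma qform_nil : qform s [] = 0 := by simp [qform]

@[simp]
lemma qform_singleton (k : ℕ) : qform s [k] = k * ((s : ℤ) - 1) * (s - k) := by
  simp [qform]

lemma qform_cons (k : ℕ) (l : List ℕ) :
    qform s (k :: l) = qform s l + k * ((s : ℤ) - 1) * (s - k)
      - 2 * k * (l.length * s - l.sum) := by
  have hsum : ∑ j : Fin l.length, ((s : ℤ) - l[(j : ℕ)]) = l.length * s - l.sum := by
    simp [Fin.sum_univ_fun_getElem, mul_comm]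
  simp only [qform, List.length_cons, List.get_eq_getElem, Fin.sum_univ_succ,
    Fin.coe_ofNat_eq_mod, Nat.zero_mod, List.getElem_cons_zero, Fin.val_succ,
    List.getElem_cons_succ, Fin.val_fin_lt, not_lt_zero, ↓reduceIte, zero_add, Fin.succ_pos,
    ← Finset.mul_sum, hsum, Nat.cast_list_sum, Fin.succ_lt_succ_iff]
  ring

end qform

lemma add_length_lt_of_pairwise {k s : ℕ} (hks : k < s) {l : List ℕ} (hl : l.Pairwise (· < ·))
    (hb : ∀ j ∈ l, k < j ∧ j < s) : k + l.length < s := by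
  have hcard : l.length ≤ #(Ioo k s) := by
    rw [← List.toFinset_card_of_nodup hl.nodup]
    exact card_le_card fun j hj => mem_Ioo.2 (hb j (List.mem_toFinset.1 hj))
  rw [Nat.card_Ioo] at hcard
  omega

lemma length_mul_le_two_mul_sum {k : ℕ} {l : List ℕ} (hl : l.Pairwise (· < ·))
    (hb : ∀ j ∈ l, k < j) : l.length * (2 * k + l.length + 1) ≤ 2 * l.sum := by
  induction l generalizing k with
  | nil => simp
  | cons a t ih =>
    rw [List.pairwise_cons] at hl
    have ht := ih hl.2 hl.1
    have ha := hb a List.mem_cons_self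
    simp only [List.length_cons, List.sum_cons]
    nlinarith

/-- For `u < s`, the minimum of `q_s` over `s`-minimal types of length `u`, attained at
`(1, 2, …, u)`. -/
def minQform (s u : ℕ) : ℤ := ∑ i ∈ range u, (((s : ℤ) - 1 - i) ^ 2 + i)

lemma minQform_mono (s : ℕ) : Monotone (minQform s) := fun _ _ h =>
  sum_le_sum_of_subset_of_nonneg (range_subset_range.2 h) fun _ _ _ => by positivity

lemma minQform_two (s : ℕ) : minQform s 2 = ((s : ℤ) - 1) ^ 2 + ((s : ℤ) - 2) ^ 2 + 1 := by
  simp [minQform, sum_range_succ]; ring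

lemma minQform_le_qform {s : ℕ} {l : List ℕ} (hl : l.Pairwise (· < ·))
    (hb : ∀ j ∈ l, 0 < j ∧ j < s) : minQform s l.length ≤ qform s l := by
  induction l with
  | nil => simp [minQform]
  | cons k t ih =>
    rw [List.pairwise_cons] at hl
    obtain ⟨hk0, hks⟩ := hb k List.mem_cons_self
    have hbt : ∀ j ∈ t, k < j ∧ j < s := fun j hj => ⟨hl.1 j hj, (hb j (.tail _ hj)).2⟩
    have hlen : ((k + t.length : ℕ) : ℤ) < s := by
      exact_mod_cast add_length_lt_of_pairwise hks hl.2 hbt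
    have hsum : (t.length : ℤ) * (2 * k + t.length + 1) ≤ 2 * (t.sum : ℤ) := by
      exact_mod_cast length_mul_le_two_mul_sum hl.2 fun j hj => (hbt j hj).1
    have ih := ih hl.2 fun j hj => hb j (.tail _ hj)
    push_cast at hlen
    rw [minQform, List.length_cons, sum_range_succ, ← minQform, qform_cons]
    set L : ℤ := (t.length : ℤ)
    have hk1 : (1 : ℤ) ≤ k := by exact_mod_cast hk0
    have hL : 0 ≤ L := by positivity
    -- the increment is minimal at `k = 1`, where the two terms below vanish
    nlinarith [mul_nonneg hL (mul_nonneg (sub_nonneg.2 hk1) (by linarith : (0 : ℤ) ≤ k + 1)),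
      mul_nonneg (by linarith : (0 : ℤ) ≤ s - 1 - L - k)
        (mul_nonneg (sub_nonneg.2 hk1) (by linarith : (0 : ℤ) ≤ s - 1 - L)),
      mul_le_mul_of_nonneg_left hsum (by linarith : (0 : ℤ) ≤ k)]

lemma sq_sub_one_lt_qform {s : ℕ} {l : List ℕ} (hl : SMinimal s l) (hlen : 2 ≤ l.length) :
    ((s : ℤ) - 1) ^ 2 < qform s l := by
  have h := (minQform_mono s hlen).trans (minQform_le_qform hl.pairwise hl.2)
  rw [minQform_two] at h
  nlinarith [sq_nonneg ((s : ℤ) - 2)]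

lemma eq_one_three_of_qform_le_sq {s : ℕ} (hs : 4 ≤ s) {l : List ℕ} (hl : SMinimal s l)
    (hlen : 2 ≤ l.length) (hq : qform s l ≤ (s : ℤ) ^ 2) : s = 4 ∧ l = [1, 3] := by
  have h2 := (minQform_mono s hlen).trans (minQform_le_qform hl.pairwise hl.2)
  rw [minQform_two] at h2
  obtain rfl : s = 4 := by
    have : (s : ℤ) ≤ 4 := by nlinarith
    omega
  refine ⟨rfl, ?_⟩
  have hlen3 : l.length < 3 := by
    by_contra! h3
    have := (minQform_mono 4 h3).trans (minQform_le_qform hl.pairwise hl.2)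
    simp [minQform, sum_range_succ] at this
    norm_num at hq
    linarith
  obtain ⟨a, b, rfl⟩ := List.length_eq_two.1 (le_antisymm (by omega) hlen)
  have hab : a < b := by simpa using hl.pairwise
  obtain ⟨ha, -⟩ := hl.2 a (by simp)
  obtain ⟨-, hb⟩ := hl.2 b (by simp)
  interval_cases b <;> interval_cases a <;> simp_all [qform_cons]

lemma eq_one_or_eq_sub_one_of_qform_singleton_le {s k : ℕ} (hk : 0 < k) (hks : k < s)
    (hq : qform s [k] ≤ ((s : ℤ) - 1) ^ 2) : k = 1 ∨ k = s - 1 := by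
  by_contra! hne
  have h2k : (2 : ℤ) ≤ k := by omega
  have hk2 : (k : ℤ) + 2 ≤ s := by omega
  rw [qform_singleton] at hq
  nlinarith [mul_nonneg (sub_nonneg.2 h2k) (by linarith : (0 : ℤ) ≤ s - 2 - k)]

lemma eq_of_qform_singleton_mem_Ioc {s k : ℕ} (hk : 0 < k) (hks : k < s)
    (h₁ : ((s : ℤ) - 1) ^ 2 < qform s [k]) (h₂ : qform s [k] ≤ (s : ℤ) ^ 2) :
    (s = 4 ∧ k = 2) ∨ (s = 5 ∧ (k = 2 ∨ k = 3)) := by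
  rw [qform_singleton] at h₁ h₂
  have h2k : 2 ≤ k := by
    by_contra! h
    obtain rfl : k = 1 := by omega
    simp at h₁
    nlinarith
  have hk2 : k + 2 ≤ s := by
    by_contra! h
    obtain rfl : s = k + 1 := by omega
    push_cast at h₁
    nlinarith
  have hs5 : s ≤ 5 := by
    by_contra! h
    have h6 : (6 : ℤ) ≤ s := by exact_mod_cast h
    nlinarith [mul_nonneg (by linarith : (0 : ℤ) ≤ k - 2) (by linarith : (0 : ℤ) ≤ s - 2 - k)]
  interval_cases s <;> omega

/-- The final claims of Corollary 8.9: if `q_s(λ) ≤ (s−1)²` then `λ` is empty, `(1)`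
or `(s−1)`; and if `(s−1)² < q_s(λ) ≤ s²` then `s = 4` and `λ = (2)` or `(1,3)`, or
`s = 5` and `λ = (2)` or `(3)`. -/
theorem stmt10 (s : ℕ) (hs : 4 ≤ s) (l : List ℕ) (hl : SMinimal s l) :
    (qform s l ≤ ((s : ℤ) - 1) ^ 2 → l = [] ∨ l = [1] ∨ l = [s - 1]) ∧
    (((s : ℤ) - 1) ^ 2 < qform s l → qform s l ≤ (s : ℤ) ^ 2 →
      (s = 4 ∧ (l = [2] ∨ l = [1, 3])) ∨ (s = 5 ∧ (l = [2] ∨ l = [3]))) := by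
  rcases l with _ | ⟨k, _ | ⟨k₂, t⟩⟩
  · exact ⟨fun _ => Or.inl rfl, fun h => absurd h (by simpa using sq_nonneg ((s : ℤ) - 1))⟩
  · obtain ⟨hk, hks⟩ := hl.2 k (by simp)
    refine ⟨fun hq => ?_, fun h₁ h₂ => ?_⟩
    · rcases eq_one_or_eq_sub_one_of_qform_singleton_le hk hks hq with rfl | rfl <;> simp
    · rcases eq_of_qform_singleton_mem_Ioc hk hks h₁ h₂ with ⟨rfl, rfl⟩ | ⟨rfl, rfl | rfl⟩ <;>
        simp
  · have hlen : 2 ≤ (k :: k₂ :: t).length := by simp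
    refine ⟨fun hq => absurd hq (sq_sub_one_lt_qform hl hlen).not_ge, fun _ hq => ?_⟩
    obtain ⟨rfl, h13⟩ := eq_one_three_of_qform_le_sq hs hl hlen hq
    exact Or.inl ⟨rfl, Or.inr h13⟩
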